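/- arXiv:2601.05044 — 6 statements merged into one kernel-verified Lean document; each statement's English description precedes it below -/
import Mathlib

section
/- Let T : ℕ → ℕ satisfy T(n) ≤ T(n-1) + T(n-d) for n ≥ d and T(n) ≤ 1 for n < d, where d ≥ 2. Then T(n) ≤ ∑_{i=0}^{⌈n/d⌉} C(n,i); in particular, T(n) ≤ (n/d + 1) · C(n, ⌈n/d⌉). -/
/-!
The partial binomial sums `S(m, k) = ∑_{i ≤ k} C(m, i)` obey Pascal's rule
`S(m + 1, k + 1) = S(m, k + 1) + S(m, k)`, and `⌈n/d⌉ = ⌈(n - d)/d⌉ + 1` for `n ≥ d`, so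
`S(n, ⌈n/d⌉)` dominates the branching recurrence and strong induction gives the first bound.
For the second, `d ≥ 2` gives `k = ⌈n/d⌉ ≤ (n + 1)/2`, where `C(n, ·)` is still increasing, so
`S(n, k) ≤ 1 + k C(n, k)`; the extra `1` fits into the slack `(n/d + 1 - k) C(n, k)`
because `n/d + 1 - k ≥ 1/d` and `C(n, k) ≥ C(n, 1) ≥ d`.
-/

open Finset

namespace Nat

theorem choose_le_succ_of_two_mul_lt {n r : ℕ} (h : 2 * r < n) :
    n.choose r ≤ n.choose (r + 1) := by
  refine Nat.le_of_mul_le_mul_right ?_ (Nat.succ_pos r)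
  rw [choose_succ_right_eq]
  exact Nat.mul_le_mul_left _ (by omega)

theorem choose_monotoneOn (n : ℕ) : MonotoneOn n.choose (Set.Iic ((n + 1) / 2)) :=
  monotoneOn_of_le_succ Set.ordConnected_Iic fun r _ _ hr => by
    rw [Order.succ_eq_add_one, Set.mem_Iic] at hr
    exact choose_le_succ_of_two_mul_lt (by omega)

theorem sum_range_succ_choose_succ (m k : ℕ) :
    ∑ i ∈ range (k + 1), (m + 1).choose i
      = ∑ i ∈ range (k + 1), m.choose i + ∑ i ∈ range k, m.choose i := by
  induction k with
  | zero => simp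
  | succ k ih =>
    rw [sum_range_succ, ih, choose_succ_succ, sum_range_succ _ (k + 1), sum_range_succ _ k]
    ring

theorem sum_range_choose_mono {m m' k k' : ℕ} (hm : m ≤ m') (hk : k ≤ k') :
    ∑ i ∈ range (k + 1), m.choose i ≤ ∑ i ∈ range (k' + 1), m'.choose i :=
  calc ∑ i ∈ range (k + 1), m.choose i ≤ ∑ i ∈ range (k + 1), m'.choose i :=
        sum_le_sum fun i _ => choose_le_choose i hm
    _ ≤ ∑ i ∈ range (k' + 1), m'.choose i :=
        sum_le_sum_of_subset (range_subset_range.mpr (by omega))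

theorem sum_range_choose_le_one_add_mul {n k : ℕ} (hk : 2 * k ≤ n + 1) :
    ∑ i ∈ range (k + 1), n.choose i ≤ 1 + k * n.choose k := by
  rw [sum_range_succ', choose_zero_right, add_comm]
  gcongr
  calc ∑ i ∈ range k, n.choose (i + 1) ≤ ∑ _i ∈ range k, n.choose k :=
        sum_le_sum fun i hi => by
          have hik := mem_range.mp hi
          exact choose_monotoneOn n (Set.mem_Iic.mpr (by omega)) (Set.mem_Iic.mpr (by omega)) hik
    _ = k * n.choose k := by simp

theorem add_sub_one_div_eq_succ_of_le {n d : ℕ} (hd : 0 < d) (hdn : d ≤ n) :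
    (n + d - 1) / d = (n - d + d - 1) / d + 1 := by
  rw [show n + d - 1 = (n - d + d - 1) + d by omega, Nat.add_div_right _ hd]

theorem add_sub_one_div_le_self {n d : ℕ} (hd : 0 < d) : (n + d - 1) / d ≤ n := by
  have := Nat.le_mul_of_pos_right n hd
  exact Nat.lt_succ_iff.mp <| (Nat.div_lt_iff_lt_mul hd).mpr (by rw [Nat.succ_mul]; omega)

theorem two_mul_add_sub_one_div_le {n d : ℕ} (hd : 2 ≤ d) : 2 * ((n + d - 1) / d) ≤ n + 1 := by
  have hkd := Nat.div_mul_le_self (n + d - 1) d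
  generalize (n + d - 1) / d = k at hkd ⊢
  rcases k with _ | k
  · omega
  · have : 2 * k ≤ k * d := by nlinarith
    rw [Nat.succ_mul] at hkd
    omega

end Nat

theorem le_sum_range_choose_of_le_add {d : ℕ} (hd : 0 < d) {T : ℕ → ℕ}
    (h1 : ∀ n, n < d → T n ≤ 1) (h2 : ∀ n, d ≤ n → T n ≤ T (n - 1) + T (n - d)) (n : ℕ) :
    T n ≤ ∑ i ∈ range ((n + d - 1) / d + 1), n.choose i := by
  induction n using Nat.strong_induction_on with | _ n ih => ?_
  rcases lt_or_ge n d with hn | hn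
  · calc T n ≤ 1 := h1 n hn
      _ = n.choose 0 := (Nat.choose_zero_right n).symm
      _ ≤ ∑ i ∈ range ((n + d - 1) / d + 1), n.choose i :=
        single_le_sum (fun _ _ => Nat.zero_le _) (mem_range.mpr (Nat.succ_pos _))
  obtain ⟨m, rfl⟩ : ∃ m, n = m + 1 := ⟨n - 1, by omega⟩
  set j := (m + 1 - d + d - 1) / d
  have hj : (m + 1 + d - 1) / d = j + 1 := Nat.add_sub_one_div_eq_succ_of_le hd hn
  have hm : T m ≤ ∑ i ∈ range (j + 1 + 1), m.choose i :=
    (ih m (by omega)).trans <| Nat.sum_range_choose_mono le_rfl <|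
      hj ▸ Nat.div_le_div_right (by omega)
  have hmd : T (m + 1 - d) ≤ ∑ i ∈ range (j + 1), m.choose i :=
    (ih (m + 1 - d) (by omega)).trans (Nat.sum_range_choose_mono (by omega) le_rfl)
  calc T (m + 1) ≤ T m + T (m + 1 - d) := h2 (m + 1) hn
    _ ≤ _ := by rw [hj, Nat.sum_range_succ_choose_succ]; exact add_le_add hm hmd

theorem one_add_mul_le_div_add_one_mul {n d k C : ℕ} (hd : 0 < d) (hdC : d ≤ C)
    (hk : k * d ≤ n + d - 1) : (1 + k * C : ℝ) ≤ ((n : ℝ) / d + 1) * C := by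
  have hk' : (k : ℝ) * d + 1 ≤ n + d := by exact_mod_cast (by omega : k * d + 1 ≤ n + d)
  have hdC' : (d : ℝ) ≤ C := by exact_mod_cast hdC
  rw [div_add_one (by positivity), div_mul_eq_mul_div, le_div_iff₀ (by positivity)]
  nlinarith

/-- If T(n) ≤ T(n-1) + T(n-d) for n ≥ d and T(n) ≤ 1 for n < d (d ≥ 2), then
    T(n) ≤ ∑_{i=0}^{⌈n/d⌉} C(n,i), and in particular
    T(n) ≤ (n/d + 1)·C(n,⌈n/d⌉). -/
theorem branching_recurrence_bound (d : ℕ) (hd : 2 ≤ d) (T : ℕ → ℕ)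
    (h1 : ∀ n, n < d → T n ≤ 1)
    (h2 : ∀ n, d ≤ n → T n ≤ T (n - 1) + T (n - d)) :
    ∀ n, T n ≤ ∑ i ∈ Finset.range ((n + d - 1) / d + 1), n.choose i ∧
      (T n : ℝ) ≤ ((n : ℝ) / d + 1) * (n.choose ((n + d - 1) / d)) := by
  intro n
  have hsum := le_sum_range_choose_of_le_add (by omega) h1 h2 n
  refine ⟨hsum, ?_⟩
  rcases lt_or_ge n d with hn | hn
  · have hC : (1 : ℝ) ≤ n.choose ((n + d - 1) / d) := by
      exact_mod_cast Nat.choose_pos (Nat.add_sub_one_div_le_self (by omega))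
    have hT : (T n : ℝ) ≤ 1 := by exact_mod_cast h1 n hn
    nlinarith [show (0 : ℝ) ≤ n / d by positivity]
  · set k := (n + d - 1) / d
    have hk1 : 0 < k := Nat.div_pos (by omega) (by omega)
    have hk2 : 2 * k ≤ n + 1 := Nat.two_mul_add_sub_one_div_le hd
    have hdC : d ≤ n.choose k := calc
      d ≤ n.choose 1 := by rwa [Nat.choose_one_right]
      _ ≤ n.choose k :=
        Nat.choose_monotoneOn n (Set.mem_Iic.mpr (by omega)) (Set.mem_Iic.mpr (by omega)) hk1
    calc (T n : ℝ) ≤ 1 + k * n.choose k := by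
          exact_mod_cast hsum.trans (Nat.sum_range_choose_le_one_add_mul hk2)
      _ ≤ _ := one_add_mul_le_div_add_one_mul (by omega) hdC (Nat.div_mul_le_self _ _)
end

section
/- Let U be a finite universe of size n, S ⊆ 2^U a set family, k a positive integer, and for X ⊆ U let s[X] be the number of k-tuples (S₁,...,S_k) ∈ S^k with ⋃ᵢ Sᵢ = X. Let z[X] = |{S ∈ S : S ⊆ X}|. Then for every Y ⊆ U, z[Y]^k = ∑_{X ⊆ Y} s[X]. Consequently, ∑_{X ⊆ U} (-1)^{|U \ X|} z[X]^k = s[U], the number of ordered k-covers of U from S. -/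
/-!
A tuple of sets lies below `Y` componentwise exactly when its union does, so `z[Y]^k` counts the
tuples whose union is some `X ⊆ Y`: the function `z^k` is the zeta transform of `s` on the subset
lattice. Möbius inversion on the Boolean lattice, whose Möbius function is
`μ(X, U) = (-1)^|U \ X|`, then recovers `s[U]`.
-/

open Finset

section Counting

variable {ι β : Type*} [Fintype ι] [DecidableEq ι] [Fintype β] [DecidableEq β]
  [SemilatticeSup β] [OrderBot β] [DecidableLE β]

theorem card_filter_forall_mem_sup_le (S : Finset β) (y : β) :
    #{f : ι → β | (∀ i, f i ∈ S) ∧ univ.sup f ≤ y} = #{b ∈ S | b ≤ y} ^ Fintype.card ι := by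
  have : ({f : ι → β | (∀ i, f i ∈ S) ∧ univ.sup f ≤ y} : Finset (ι → β)) =
      Fintype.piFinset fun _ => {b ∈ S | b ≤ y} := by
    ext f
    simp [forall_and]
  rw [this, Fintype.card_piFinset, prod_const, card_univ]

theorem card_filter_le_pow_eq_sum_card_filter_sup_eq [LocallyFiniteOrderBot β] (S : Finset β)
    (y : β) :
    #{b ∈ S | b ≤ y} ^ Fintype.card ι =
      ∑ x ∈ Iic y, #{f : ι → β | (∀ i, f i ∈ S) ∧ univ.sup f = x} := by
  rw [← card_filter_forall_mem_sup_le, card_eq_sum_card_fiberwise (f := fun f => univ.sup f)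
    (t := Iic y) fun f hf => mem_Iic.2 (mem_filter.1 hf).2.2]
  refine sum_congr rfl fun x hx => congrArg card ?_
  ext f
  simp only [filter_filter, mem_filter, mem_univ, true_and]
  constructor
  · rintro ⟨⟨hS, -⟩, rfl⟩
    exact ⟨hS, rfl⟩
  · rintro ⟨hS, rfl⟩
    exact ⟨⟨hS, mem_Iic.1 hx⟩, rfl⟩

end Counting

section Moebius

variable {α : Type*} [DecidableEq α]

theorem sum_Icc_neg_one_pow_card_sdiff (W U : Finset α) :
    ∑ X ∈ Icc W U, (-1 : ℤ) ^ #(U \ X) = if W = U then 1 else 0 := by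
  by_cases hWU : W ⊆ U
  · -- complementation in `U` maps `Icc W U` onto the subsets of `U \ W`
    have : ∑ X ∈ Icc W U, (-1 : ℤ) ^ #(U \ X) = ∑ C ∈ (U \ W).powerset, (-1 : ℤ) ^ #C := by
      refine sum_nbij' (U \ ·) (U \ ·) ?_ ?_ ?_ ?_ ?_
      · intro X hX
        simp only [mem_Icc, mem_powerset] at hX ⊢
        exact sdiff_subset_sdiff subset_rfl hX.1
      · intro C hC
        simp only [mem_Icc, mem_powerset] at hC ⊢
        exact ⟨le_sdiff.2 ⟨hWU, disjoint_of_subset_right hC disjoint_sdiff⟩, sdiff_subset⟩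
      · intro X hX
        exact Finset.sdiff_sdiff_eq_self (mem_Icc.1 hX).2
      · intro C hC
        exact Finset.sdiff_sdiff_eq_self ((mem_powerset.1 hC).trans sdiff_subset)
      · intro X _; rfl
    rw [this, sum_powerset_neg_one_pow_card]
    exact if_congr (sdiff_eq_empty_iff_subset.trans ⟨hWU.antisymm, fun h => h ▸ subset_rfl⟩) rfl rfl
  · rw [Icc_eq_empty (by simpa using hWU), sum_empty, if_neg (by rintro rfl; exact hWU subset_rfl)]

theorem moebius_inversion_powerset {R : Type*} [CommRing R] {f g : Finset α → R}
    (h : ∀ X, f X = ∑ W ∈ X.powerset, g W) (U : Finset α) :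
    ∑ X ∈ U.powerset, (-1 : R) ^ #(U \ X) * f X = g U := by
  simp_rw [h, mul_sum]
  rw [sum_comm' (t' := U.powerset) (s' := fun W => Icc W U) (by
    intro X W; simp only [mem_powerset, mem_Icc]; constructor
    · rintro ⟨h1, h2⟩; exact ⟨⟨h2, h1⟩, h2.trans h1⟩
    · rintro ⟨⟨h2, h1⟩, -⟩; exact ⟨h1, h2⟩)]
  simp_rw [← sum_mul]
  have key (W : Finset α) : ∑ X ∈ Icc W U, (-1 : R) ^ #(U \ X) = if W = U then 1 else 0 := by
    exact_mod_cast congrArg (Int.cast : ℤ → R) (sum_Icc_neg_one_pow_card_sdiff W U)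
  simp [key]

end Moebius

theorem set_cover_inclusion_exclusion_general {α : Type} [Fintype α] [DecidableEq α]
    (S : Finset (Finset α)) (k : ℕ) :
    (∀ Y : Finset α,
      ((S.filter fun T => T ⊆ Y).card) ^ k =
        ∑ X ∈ Y.powerset,
          (Finset.univ.filter fun f : Fin k → Finset α =>
            (∀ i, f i ∈ S) ∧ Finset.univ.sup f = X).card) ∧
    (∑ X ∈ (Finset.univ : Finset α).powerset,
        (-1 : ℤ) ^ ((Finset.univ \ X).card) * ((S.filter fun T => T ⊆ X).card : ℤ) ^ k
      = ((Finset.univ.filter fun f : Fin k → Finset α =>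
            (∀ i, f i ∈ S) ∧ Finset.univ.sup f = Finset.univ).card : ℤ)) := by
  have zeta (Y : Finset α) : #{T ∈ S | T ⊆ Y} ^ k =
      ∑ X ∈ Y.powerset, #{f : Fin k → Finset α | (∀ i, f i ∈ S) ∧ univ.sup f = X} := by
    rw [← Iic_eq_powerset]
    -- `convert` reconciles the two `Decidable (∀ i : Fin k, _)` instances
    convert card_filter_le_pow_eq_sum_card_filter_sup_eq (ι := Fin k) S Y
    exact (Fintype.card_fin k).symm
  refine ⟨zeta, moebius_inversion_powerset (g := fun X =>
    (#{f : Fin k → Finset α | (∀ i, f i ∈ S) ∧ univ.sup f = X} : ℤ)) (fun X => ?_) univ⟩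
  exact_mod_cast zeta X

/-- Inclusion-exclusion for Set Cover: with
    s[X] = #{(S₁,...,S_k) ∈ 𝒮^k : ⋃ᵢ Sᵢ = X} and z[X] = #{S ∈ 𝒮 : S ⊆ X},
    we have z[Y]^k = ∑_{X ⊆ Y} s[X] for all Y, and consequently
    ∑_{X ⊆ U} (-1)^{|U∖X|} z[X]^k = s[U], the number of ordered k-covers. -/
theorem set_cover_inclusion_exclusion {α : Type} [Fintype α] [DecidableEq α]
    (S : Finset (Finset α)) (k : ℕ) (hk : 1 ≤ k) :
    (∀ Y : Finset α,
      ((S.filter fun T => T ⊆ Y).card) ^ k =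
        ∑ X ∈ Y.powerset,
          (Finset.univ.filter fun f : Fin k → Finset α =>
            (∀ i, f i ∈ S) ∧ Finset.univ.sup f = X).card) ∧
    (∑ X ∈ (Finset.univ : Finset α).powerset,
        (-1 : ℤ) ^ ((Finset.univ \ X).card) * ((S.filter fun T => T ⊆ X).card : ℤ) ^ k
      = ((Finset.univ.filter fun f : Fin k → Finset α =>
            (∀ i, f i ∈ S) ∧ Finset.univ.sup f = Finset.univ).card : ℤ)) :=
  set_cover_inclusion_exclusion_general S k
end

section
/- Let A and B be two perfect matchings of the complete graph on an even vertex set [t]. Then the number of unordered cuts C ∈ Π₂([t]) (partitions of [t] into two blocks) such that every edge of both A and B is either entirely contained in one block or entirely contained in the other equals 2^{c-1}, where c is the number of connected components of the multigraph ([t], A ∪ B). In particular this count is odd if and only if A ∪ B is a Hamiltonian cycle. -/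
open Finset

/-- Number of subsets of a finite type containing a fixed element is `2^(n-1)`. -/
lemma card_filter_mem_univ_finset {α : Type*} [Fintype α] [DecidableEq α] (a : α) :
    ((Finset.univ : Finset (Finset α)).filter (fun S => a ∈ S)).card
      = 2 ^ (Fintype.card α - 1) := by
  classical
  have h : ((Finset.univ : Finset (Finset α)).filter (fun S => a ∈ S)).card
      = ((Finset.univ.erase a).powerset).card := by
    apply Finset.card_bij' (fun S _ => S.erase a) (fun T _ => insert a T)
    · intro S hS
      simp only [Finset.mem_filter] at hS
      exact Finset.insert_erase hS.2
    · intro T hT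
      simp only [Finset.mem_powerset] at hT
      have haT : a ∉ T := fun h => (Finset.mem_erase.mp (hT h)).1 rfl
      exact Finset.erase_insert haT
    · intro S hS
      simp only [Finset.mem_powerset]
      exact Finset.erase_subset_erase a (Finset.subset_univ S)
    · intro T hT
      simp only [Finset.mem_filter, Finset.mem_univ, true_and]
      exact Finset.mem_insert_self a T
  rw [h, Finset.card_powerset, Finset.card_erase_of_mem (Finset.mem_univ a),
    Finset.card_univ]

/-- Let A, B be perfect matchings of the complete graph on [t] (t even).
    The number of unordered cuts (represented by their block containing the
    vertex 0) splitting both A and B equals 2^(c-1), where c is the number of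
    connected components of the multigraph ([t], A ∪ B); in particular this
    count is odd iff A ∪ B is a Hamiltonian cycle (i.e. connected). -/
theorem cuts_splitting_two_matchings (t : ℕ) (ht : 0 < t) (htEven : Even t)
    (A B : Finset (Finset (Fin t)))
    (hA2 : ∀ e ∈ A, e.card = 2)
    (hAdisj : ∀ e ∈ A, ∀ f ∈ A, e ≠ f → Disjoint e f)
    (hAcov : A.biUnion id = Finset.univ)
    (hB2 : ∀ e ∈ B, e.card = 2)
    (hBdisj : ∀ e ∈ B, ∀ f ∈ B, e ≠ f → Disjoint e f)
    (hBcov : B.biUnion id = Finset.univ) :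
    ((Finset.univ : Finset (Finset (Fin t))).filter fun C =>
        (⟨0, ht⟩ : Fin t) ∈ C ∧ (∀ e ∈ A, e ⊆ C ∨ Disjoint e C) ∧
          (∀ e ∈ B, e ⊆ C ∨ Disjoint e C)).card
      = 2 ^ (Nat.card
          (SimpleGraph.fromRel fun v w =>
            ({v, w} : Finset (Fin t)) ∈ A ∪ B).ConnectedComponent - 1) ∧
    (Odd ((Finset.univ : Finset (Finset (Fin t))).filter fun C =>
        (⟨0, ht⟩ : Fin t) ∈ C ∧ (∀ e ∈ A, e ⊆ C ∨ Disjoint e C) ∧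
          (∀ e ∈ B, e ⊆ C ∨ Disjoint e C)).card
      ↔ (SimpleGraph.fromRel fun v w =>
            ({v, w} : Finset (Fin t)) ∈ A ∪ B).Connected) := by
  classical
  set G := SimpleGraph.fromRel fun v w => ({v, w} : Finset (Fin t)) ∈ A ∪ B with hG
  -- A set splits both matchings iff it is closed under reachability
  have key : ∀ C : Finset (Fin t),
      ((∀ e ∈ A, e ⊆ C ∨ Disjoint e C) ∧ (∀ e ∈ B, e ⊆ C ∨ Disjoint e C))
        ↔ (∀ v w : Fin t, G.Reachable v w → (v ∈ C ↔ w ∈ C)) := by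
    intro C
    constructor
    · rintro ⟨hA', hB'⟩
      have hadj : ∀ v w : Fin t, G.Adj v w → (v ∈ C ↔ w ∈ C) := by
        intro v w hvw
        rw [hG, SimpleGraph.fromRel_adj] at hvw
        obtain ⟨hne, hrel⟩ := hvw
        have he : ({v, w} : Finset (Fin t)) ∈ A ∪ B := by
          rcases hrel with h | h
          · exact h
          · rwa [Finset.pair_comm]
        have hv : v ∈ ({v, w} : Finset (Fin t)) := Finset.mem_insert_self _ _
        have hw : w ∈ ({v, w} : Finset (Fin t)) :=
          Finset.mem_insert_of_mem (Finset.mem_singleton_self _)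
        have hsplit : ({v, w} : Finset (Fin t)) ⊆ C ∨ Disjoint ({v, w} : Finset (Fin t)) C := by
          rcases Finset.mem_union.mp he with h | h
          · exact hA' _ h
          · exact hB' _ h
        rcases hsplit with h | h
        · exact ⟨fun _ => h hw, fun _ => h hv⟩
        · constructor
          · intro hvC; exact absurd hvC (Finset.disjoint_left.mp h hv)
          · intro hwC; exact absurd hwC (Finset.disjoint_left.mp h hw)
      intro v w hr
      obtain ⟨p⟩ := hr
      induction p with
      | nil => rfl
      | cons h p ih => exact (hadj _ _ h).trans ih
    · intro hcl
      have gen : ∀ M : Finset (Finset (Fin t)), (∀ e ∈ M, e.card = 2) →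
          M ⊆ A ∪ B → ∀ e ∈ M, e ⊆ C ∨ Disjoint e C := by
        intro M hM2 hMsub e he
        obtain ⟨v, w, hvw, rfl⟩ := Finset.card_eq_two.mp (hM2 e he)
        have hadj : G.Adj v w := by
          rw [hG, SimpleGraph.fromRel_adj]
          exact ⟨hvw, Or.inl (hMsub he)⟩
        have hiff := hcl v w hadj.reachable
        by_cases hv : v ∈ C
        · left
          exact Finset.insert_subset hv (Finset.singleton_subset_iff.mpr (hiff.mp hv))
        · right
          refine Finset.disjoint_left.mpr ?_
          intro x hx
          rcases Finset.mem_insert.mp hx with rfl | hx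
          · exact hv
          · rw [Finset.mem_singleton] at hx
            subst hx
            exact fun hw => hv (hiff.mpr hw)
      exact ⟨gen A hA2 Finset.subset_union_left, gen B hB2 Finset.subset_union_right⟩
  haveI : Fintype G.ConnectedComponent := Fintype.ofFinite _
  set c₀ := G.connectedComponentMk ⟨0, ht⟩ with hc₀
  -- the main counting
  have hcard : ((Finset.univ : Finset (Finset (Fin t))).filter fun C =>
        (⟨0, ht⟩ : Fin t) ∈ C ∧ (∀ e ∈ A, e ⊆ C ∨ Disjoint e C) ∧
          (∀ e ∈ B, e ⊆ C ∨ Disjoint e C)).card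
      = ((Finset.univ : Finset (Finset G.ConnectedComponent)).filter
          (fun S => c₀ ∈ S)).card := by
    apply Finset.card_bij' (fun C _ => C.image G.connectedComponentMk)
      (fun S _ => Finset.univ.filter (fun v => G.connectedComponentMk v ∈ S))
    · intro C hC
      simp only [Finset.mem_filter, Finset.mem_univ, true_and] at hC ⊢
      exact Finset.mem_image_of_mem _ hC.1
    · intro S hS
      simp only [Finset.mem_filter, Finset.mem_univ, true_and] at hS ⊢
      refine ⟨hS, ?_⟩
      rw [key]
      intro v w hr
      simp only [Finset.mem_filter, Finset.mem_univ, true_and]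
      rw [SimpleGraph.ConnectedComponent.sound hr]
    · intro C hC
      simp only [Finset.mem_filter, Finset.mem_univ, true_and] at hC
      have hcl := (key C).mp hC.2
      ext v
      simp only [Finset.mem_filter, Finset.mem_univ, true_and, Finset.mem_image]
      constructor
      · rintro ⟨u, hu, huv⟩
        exact (hcl u v (SimpleGraph.ConnectedComponent.exact huv)).mp hu
      · intro hv; exact ⟨v, hv, rfl⟩
    · intro S hS
      ext k
      simp only [Finset.mem_image, Finset.mem_filter, Finset.mem_univ, true_and]
      constructor
      · rintro ⟨v, hv, rfl⟩; exact hv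
      · intro hk
        obtain ⟨v, rfl⟩ := k.exists_rep
        exact ⟨v, hk, rfl⟩
  rw [hcard, card_filter_mem_univ_finset c₀, Nat.card_eq_fintype_card]
  refine ⟨rfl, ?_⟩
  have hpos : 0 < Fintype.card G.ConnectedComponent := Fintype.card_pos_iff.mpr ⟨c₀⟩
  have hconn : Fintype.card G.ConnectedComponent = 1 ↔ G.Connected := by
    constructor
    · intro h1
      haveI : Nonempty (Fin t) := ⟨⟨0, ht⟩⟩
      refine ⟨fun v w => ?_⟩
      have := Fintype.card_le_one_iff.mp (le_of_eq h1)
        (G.connectedComponentMk v) (G.connectedComponentMk w)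
      exact (SimpleGraph.ConnectedComponent.eq).mp this
    · intro h
      rw [Fintype.card_eq_one_iff]
      refine ⟨c₀, fun k => ?_⟩
      obtain ⟨v, rfl⟩ := k.exists_rep
      exact SimpleGraph.ConnectedComponent.sound (h.preconnected v ⟨0, ht⟩)
  constructor
  · intro hodd
    rw [← hconn]
    by_contra hne
    have h1 : 1 ≤ Fintype.card G.ConnectedComponent - 1 := by omega
    have : Even (2 ^ (Fintype.card G.ConnectedComponent - 1)) := by
      obtain ⟨k, hk⟩ := Nat.exists_eq_add_of_le h1
      rw [hk, pow_add, pow_one]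
      exact Even.mul_right (by norm_num) _
    exact (Nat.not_even_iff_odd.mpr hodd) this
  · intro h
    rw [← hconn] at h
    rw [h]
    simp
end

section
/- Over a field of characteristic 2, the matchings connectivity matrix satisfies H_t = S_t · S_tᵀ, where H_t is indexed by pairs of perfect matchings of [t] with H_t[A,B] = 1 iff A ∪ B is a Hamiltonian cycle, and S_t is indexed by perfect matchings and cuts with S_t[A,C] = 1 iff the cut C splits the matching A. -/
open Matrix
open scoped Classical symmDiff

/-- A family of 2-sets forming a perfect matching of the complete graph on `Fin t`. -/
def IsPerfectMatchingFamily {t : ℕ} (M : Finset (Finset (Fin t))) : Prop :=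
  (∀ e ∈ M, e.card = 2) ∧ (∀ e ∈ M, ∀ f ∈ M, e ≠ f → Disjoint e f) ∧
    M.biUnion id = Finset.univ

/-- A cut splits a matching iff it is closed under the edges of the matching. -/
lemma splits_iff_pairs {t : ℕ} {A : Finset (Finset (Fin t))} (hA : ∀ e ∈ A, e.card = 2)
    (C : Finset (Fin t)) :
    (∀ e ∈ A, e ⊆ C ∨ Disjoint e C) ↔
      ∀ x y : Fin t, ({x, y} : Finset (Fin t)) ∈ A → (x ∈ C ↔ y ∈ C) := by
  constructor
  · intro h x y hxy
    rcases h _ hxy with h' | h'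
    · constructor
      · intro _; exact h' (by simp)
      · intro _; exact h' (by simp)
    · constructor
      · intro hx; exact absurd hx (Finset.disjoint_left.mp h' (by simp))
      · intro hy; exact absurd hy (Finset.disjoint_left.mp h' (by simp))
  · intro h e he
    obtain ⟨x, y, hxy, rfl⟩ := Finset.card_eq_two.mp (hA e he)
    by_cases hx : x ∈ C
    · left
      intro z hz
      simp only [Finset.mem_insert, Finset.mem_singleton] at hz
      rcases hz with rfl | rfl
      · exact hx
      · exact (h x z he).mp hx
    · right
      rw [Finset.disjoint_left]
      intro z hz
      simp only [Finset.mem_insert, Finset.mem_singleton] at hz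
      rcases hz with rfl | rfl
      · exact hx
      · exact fun hzc => hx ((h x z he).mpr hzc)

/-- Edge-closure implies reachability-closure. -/
lemma reach_closed {t : ℕ} {G : SimpleGraph (Fin t)} {C : Finset (Fin t)}
    (h : ∀ x y, G.Adj x y → (x ∈ C ↔ y ∈ C)) {x y : Fin t} (hr : G.Reachable x y) :
    x ∈ C ↔ y ∈ C := by
  obtain ⟨w⟩ := hr
  induction w with
  | nil => rfl
  | cons hadj _ ih => exact (h _ _ hadj).trans ih

/-- Over GF(2), the matchings connectivity matrix factors as H_t = S_t·S_tᵀ: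
    H_t[A,B] = 1 iff A ∪ B is a Hamiltonian cycle (i.e. the union graph is
    connected), S_t[A,C] = 1 iff the cut C (represented by its block containing
    vertex 0) splits the matching A. -/
theorem matchings_connectivity_factorization (t : ℕ) (ht : 0 < t) (htEven : Even t) :
    (Matrix.of fun A B : {M : Finset (Finset (Fin t)) // IsPerfectMatchingFamily M} =>
        if (SimpleGraph.fromRel fun v w =>
              ({v, w} : Finset (Fin t)) ∈ A.1 ∪ B.1).Connected
        then (1 : ZMod 2) else 0)
    = (Matrix.of fun (A : {M : Finset (Finset (Fin t)) // IsPerfectMatchingFamily M})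
          (C : {C : Finset (Fin t) // (⟨0, ht⟩ : Fin t) ∈ C}) =>
          if ∀ e ∈ A.1, e ⊆ C.1 ∨ Disjoint e C.1 then (1 : ZMod 2) else 0) *
      (Matrix.of fun (A : {M : Finset (Finset (Fin t)) // IsPerfectMatchingFamily M})
          (C : {C : Finset (Fin t) // (⟨0, ht⟩ : Fin t) ∈ C}) =>
          if ∀ e ∈ A.1, e ⊆ C.1 ∨ Disjoint e C.1 then (1 : ZMod 2) else 0)ᵀ := by
  ext A B
  set v0 : Fin t := ⟨0, ht⟩ with hv0
  set G : SimpleGraph (Fin t) :=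
    SimpleGraph.fromRel fun v w => ({v, w} : Finset (Fin t)) ∈ A.1 ∪ B.1 with hG
  simp only [Matrix.mul_apply, Matrix.transpose_apply, Matrix.of_apply]
  set P : Finset (Fin t) → Prop := fun C =>
    (∀ e ∈ A.1, e ⊆ C ∨ Disjoint e C) ∧ (∀ e ∈ B.1, e ⊆ C ∨ Disjoint e C) with hP
  have hsummand : ∀ C : {C : Finset (Fin t) // v0 ∈ C},
      (if ∀ e ∈ A.1, e ⊆ C.1 ∨ Disjoint e C.1 then (1 : ZMod 2) else 0) *
        (if ∀ e ∈ B.1, e ⊆ C.1 ∨ Disjoint e C.1 then (1 : ZMod 2) else 0) =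
      if P C.1 then 1 else 0 := by
    intro C
    by_cases h1 : ∀ e ∈ A.1, e ⊆ C.1 ∨ Disjoint e C.1 <;>
      by_cases h2 : ∀ e ∈ B.1, e ⊆ C.1 ∨ Disjoint e C.1
    · rw [if_pos h1, if_pos h2, if_pos (show P C.1 from ⟨h1, h2⟩), mul_one]
    · rw [if_neg h2, if_neg (show ¬ P C.1 from fun h => h2 h.2), mul_zero]
    · rw [if_neg h1, if_neg (show ¬ P C.1 from fun h => h1 h.1), zero_mul]
    · rw [if_neg h1, if_neg (show ¬ P C.1 from fun h => h1 h.1), zero_mul]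
  have hadj_iff : ∀ x y : Fin t,
      G.Adj x y ↔ x ≠ y ∧ ({x, y} : Finset (Fin t)) ∈ A.1 ∪ B.1 := by
    intro x y
    rw [hG, SimpleGraph.fromRel_adj]
    constructor
    · rintro ⟨hne, h | h⟩
      · exact ⟨hne, h⟩
      · exact ⟨hne, by rwa [Finset.pair_comm]⟩
    · rintro ⟨hne, h⟩; exact ⟨hne, Or.inl h⟩
  have hPQ : ∀ C : Finset (Fin t),
      P C ↔ ∀ x y, G.Adj x y → (x ∈ C ↔ y ∈ C) := by
    intro C
    constructor
    · rintro ⟨h1, h2⟩ x y hxy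
      obtain ⟨hne, hm⟩ := (hadj_iff x y).mp hxy
      rcases Finset.mem_union.mp hm with h | h
      · exact (splits_iff_pairs A.2.1 C).mp h1 x y h
      · exact (splits_iff_pairs B.2.1 C).mp h2 x y h
    · intro hQ
      constructor
      · apply (splits_iff_pairs A.2.1 C).mpr
        intro x y hxy
        have hne : x ≠ y := by
          rintro rfl
          have := A.2.1 _ hxy
          simp at this
        exact hQ x y ((hadj_iff x y).mpr ⟨hne, Finset.mem_union_left _ hxy⟩)
      · apply (splits_iff_pairs B.2.1 C).mpr
        intro x y hxy
        have hne : x ≠ y := by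
          rintro rfl
          have := B.2.1 _ hxy
          simp at this
        exact hQ x y ((hadj_iff x y).mpr ⟨hne, Finset.mem_union_right _ hxy⟩)
  rw [Finset.sum_congr rfl fun C _ => hsummand C]
  by_cases hconn : G.Connected
  · rw [if_pos hconn]
    have huniv : P Finset.univ :=
      ⟨fun e _ => Or.inl (Finset.subset_univ e), fun e _ => Or.inl (Finset.subset_univ e)⟩
    have honly : ∀ C : {C : Finset (Fin t) // v0 ∈ C},
        P C.1 ↔ C = ⟨Finset.univ, Finset.mem_univ v0⟩ := by
      intro C
      constructor
      · intro hPC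
        apply Subtype.ext
        apply Finset.eq_univ_of_forall
        intro x
        exact (reach_closed ((hPQ C.1).mp hPC) (hconn.preconnected v0 x)).mp C.2
      · rintro rfl; exact huniv
    rw [Finset.sum_congr rfl fun C _ => if_congr (honly C) rfl rfl]
    simp
  · rw [if_neg hconn]
    have hnp : ¬ G.Preconnected := fun hp =>
      hconn ((SimpleGraph.connected_iff (G := G)).mpr ⟨hp, ⟨v0⟩⟩)
    obtain ⟨u, w, hur⟩ : ∃ u w, ¬ G.Reachable u w := by
      by_contra h; push_neg at h; exact hnp fun u w => h u w
    obtain ⟨v, hv⟩ : ∃ v, ¬ G.Reachable v0 v := by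
      by_cases h1 : G.Reachable v0 u
      · exact ⟨w, fun h2 => hur (h1.symm.trans h2)⟩
      · exact ⟨u, h1⟩
    set K : Finset (Fin t) := Finset.univ.filter (fun x => G.Reachable v x) with hK
    have hvK : v ∈ K := by
      simp only [hK, Finset.mem_filter, Finset.mem_univ, true_and]
      exact SimpleGraph.Reachable.refl v
    have h0K : v0 ∉ K := by
      simp only [hK, Finset.mem_filter, Finset.mem_univ, true_and]
      exact fun h => hv h.symm
    have hKclosed : ∀ x y, G.Adj x y → (x ∈ K ↔ y ∈ K) := by
      intro x y hxy
      simp only [hK, Finset.mem_filter, Finset.mem_univ, true_and]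
      exact ⟨fun h => h.trans hxy.reachable, fun h => h.trans hxy.symm.reachable⟩
    have hPsymm : ∀ C : Finset (Fin t), P C → P (C ∆ K) := by
      intro C hPC
      apply (hPQ _).mpr
      intro x y hxy
      have h1 := (hPQ C).mp hPC x y hxy
      have h2 := hKclosed x y hxy
      simp [Finset.mem_symmDiff, h1, h2]
    have hmem : ∀ C : {C : Finset (Fin t) // v0 ∈ C}, v0 ∈ C.1 ∆ K := by
      intro C
      rw [Finset.mem_symmDiff]
      exact Or.inl ⟨C.2, h0K⟩
    symm
    refine Finset.sum_ninvolution
      (fun C : {C : Finset (Fin t) // v0 ∈ C} =>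
        if h : P C.1 then (⟨C.1 ∆ K, hmem C⟩ : {C : Finset (Fin t) // v0 ∈ C}) else C) ?_ ?_
      (fun C => Finset.mem_univ _) ?_
    · intro C
      beta_reduce
      by_cases hC : P C.1
      · rw [dif_pos hC]
        have h2 : P (C.1 ∆ K) := hPsymm C.1 hC
        rw [if_pos hC, if_pos h2]
        decide
      · rw [dif_neg hC, if_neg hC, add_zero]
    · intro C hfne heq
      beta_reduce at heq
      have hC : P C.1 := by
        by_contra h; rw [if_neg h] at hfne; exact hfne rfl
      rw [dif_pos hC] at heq
      have hvmem := congrArg (fun s => v ∈ s.1) heq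
      simp only [Finset.mem_symmDiff, hvK] at hvmem
      by_cases hvc : v ∈ C.1 <;> simp [hvc] at hvmem
    · intro C
      beta_reduce
      by_cases hC : P C.1
      · have h2 : P (C.1 ∆ K) := hPsymm C.1 hC
        rw [dif_pos hC]
        simp only
        rw [dif_pos h2]
        exact Subtype.ext (symmDiff_symmDiff_cancel_right _ _)
      · rw [dif_neg hC, dif_neg hC]
end

section
/- Let G be a directed multigraph on vertex set V with a distinguished vertex s, and for X ⊆ E(G) with |X| = |V| - 1, consider the matrices I_G^{-s} and O_G^{-s} (in/out incidence matrices with the row of s removed). Then det((I_G^{-s} - O_G^{-s})[·,X]) · det(I_G^{-s}[·,X]) equals 1 if X is an out-branching (spanning arborescence) rooted at s, and 0 otherwise. -/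
open Matrix
open scoped Classical

section Aux
variable {n : Type} [Fintype n] [DecidableEq n]

lemma det_perm_indicator (π : Equiv.Perm n) :
    (Matrix.of fun u w : n => if π w = u then (1:ℤ) else 0).det = Equiv.Perm.sign π := by
  have h : (Matrix.of fun u w : n => if π w = u then (1:ℤ) else 0)
      = (1 : Matrix n n ℤ).submatrix id π := by
    ext u w
    simp [Matrix.one_apply, eq_comm]
  rw [h, Matrix.det_permute', Matrix.det_one, mul_one]; simp

lemma det_one_sub_of_rank (A : Matrix n n ℤ) (r : n → ℕ)
    (h : ∀ u v, A u v ≠ 0 → r u < r v) : (1 - A).det = 1 := by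
  have hbt : (1 - A).BlockTriangular r := by
    intro i j hij
    have hA : A i j = 0 := by
      by_contra hA
      exact absurd (h _ _ hA) (by omega)
    have hne : i ≠ j := by rintro rfl; omega
    simp [Matrix.sub_apply, Matrix.one_apply, hA, hne]
  rw [hbt.det]
  apply Finset.prod_eq_one
  intro k _
  have hb : (1 - A).toSquareBlock r k = 1 := by
    ext i j
    rcases eq_or_ne i j with rfl | hij
    · have hAii : A i.1 i.1 = 0 := by
        by_contra hA; exact lt_irrefl _ (h _ _ hA)
      simp [Matrix.toSquareBlock_def, hAii]
    · have hne : (i : n) ≠ (j : n) := fun hh => hij (Subtype.ext hh)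
      have hA : A i.1 j.1 = 0 := by
        by_contra hA
        have := h _ _ hA
        have hi := i.2; have hj := j.2
        omega
      simp [Matrix.toSquareBlock_def, hA, Matrix.one_apply, hne, hij]
  rw [hb, Matrix.det_one]

lemma det_eq_zero_of_mulVec' (A : Matrix n n ℤ) (x : n → ℤ) (hx : x ≠ 0)
    (h : A.mulVec x = 0) : A.det = 0 :=
  Matrix.exists_mulVec_eq_zero_iff.1 ⟨x, hx, h⟩

end Aux

/-- `X` is an out-branching (spanning arborescence) rooted at `s` in the
    directed multigraph with edge set `E`, source map `src` and target map
    `tgt`: every vertex other than `s` has exactly one incoming edge of `X`,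
    `s` has none, and every vertex is reachable from `s` along edges of `X`. -/
def IsOutBranching {V E : Type} (src tgt : E → V) (X : Finset E) (s : V) : Prop :=
  (∀ v : V, v ≠ s → ∃! e, e ∈ X ∧ tgt e = v) ∧
  (∀ e ∈ X, tgt e ≠ s) ∧
  (∀ v : V, Relation.ReflTransGen (fun a b => ∃ e ∈ X, src e = a ∧ tgt e = b) s v)

/-- For a loopless directed multigraph and X ⊆ E with |X| = |V| - 1, the
    product det((I^{-s} - O^{-s})[·,X]) · det(I^{-s}[·,X]) equals 1 if X is an
    out-branching rooted at s, and 0 otherwise. (The common column indexing is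
    given by a bijection σ; the product is independent of its choice.) -/
theorem outbranching_determinant_product
    {V E : Type} [Fintype V] [Fintype E] [DecidableEq V] [DecidableEq E]
    (src tgt : E → V) (hloop : ∀ e, src e ≠ tgt e) (s : V)
    (X : Finset E) (hX : X.card = Fintype.card V - 1)
    (σ : {v : V // v ≠ s} ≃ {e : E // e ∈ X}) :
    (Matrix.of fun u w : {v : V // v ≠ s} =>
        ((if tgt (σ w).1 = u.1 then (1 : ℤ) else 0) -
          (if src (σ w).1 = u.1 then (1 : ℤ) else 0))).det *
      (Matrix.of fun u w : {v : V // v ≠ s} =>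
        (if tgt (σ w).1 = u.1 then (1 : ℤ) else 0)).det
    = if IsOutBranching src tgt X s then 1 else 0 := by
  classical
  set M : Matrix {v : V // v ≠ s} {v : V // v ≠ s} ℤ :=
    Matrix.of fun u w : {v : V // v ≠ s} =>
        ((if tgt (σ w).1 = u.1 then (1 : ℤ) else 0) -
          (if src (σ w).1 = u.1 then (1 : ℤ) else 0)) with hMdef
  set N : Matrix {v : V // v ≠ s} {v : V // v ≠ s} ℤ :=
    Matrix.of fun u w : {v : V // v ≠ s} =>
        (if tgt (σ w).1 = u.1 then (1 : ℤ) else 0) with hNdef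
  by_cases hA0 : ∃ w : {v : V // v ≠ s}, tgt (σ w).1 = s
  · obtain ⟨w, hw⟩ := hA0
    have hdet : N.det = 0 := by
      apply Matrix.det_eq_zero_of_column_eq_zero w
      intro u
      rw [hNdef]
      simp only [Matrix.of_apply]
      rw [if_neg]
      rw [hw]
      exact fun h => u.2 h.symm
    have hnb : ¬ IsOutBranching src tgt X s := by
      rintro ⟨-, h2, -⟩
      exact h2 (σ w).1 (σ w).2 hw
    rw [hdet, mul_zero, if_neg hnb]
  push_neg at hA0
  by_cases hinj : Function.Injective (fun w : {v : V // v ≠ s} => tgt (σ w).1)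
  swap
  · rw [Function.not_injective_iff] at hinj
    obtain ⟨w₁, w₂, heq, hne⟩ := hinj
    have hdet : N.det = 0 := by
      apply Matrix.det_zero_of_column_eq hne
      intro u
      rw [hNdef]
      simp only [Matrix.of_apply]
      rw [heq]
    have hnb : ¬ IsOutBranching src tgt X s := by
      rintro ⟨h1, -, -⟩
      obtain ⟨e, -, hu⟩ := h1 (tgt (σ w₁).1) (hA0 w₁)
      have h1' : (σ w₁).1 = e := hu _ ⟨(σ w₁).2, rfl⟩
      have h2' : (σ w₂).1 = e := hu _ ⟨(σ w₂).2, heq.symm⟩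
      exact hne (σ.injective (Subtype.ext (h1'.trans h2'.symm)))
    rw [hdet, mul_zero, if_neg hnb]
  · -- main case: tgt of X-edges gives a permutation of V \ {s}
    have hf'inj : Function.Injective
        (fun w : {v : V // v ≠ s} => (⟨tgt (σ w).1, hA0 w⟩ : {v : V // v ≠ s})) := by
      intro a b hab
      exact hinj (congrArg Subtype.val hab)
    set π : Equiv.Perm {v : V // v ≠ s} :=
      Equiv.ofBijective _ ((Finite.injective_iff_bijective).1 hf'inj) with hπdef
    have hπ : ∀ w, tgt (σ w).1 = (π w).1 := fun w => rfl
    have hπs : ∀ v, tgt (σ (π.symm v)).1 = v.1 := by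
      intro v; rw [hπ, π.apply_symm_apply]
    -- the parent function g
    set g : V → V := fun v => if h : v = s then s else src (σ (π.symm ⟨v, h⟩)).1 with hgdef
    have hg : ∀ v : {v : V // v ≠ s}, g v.1 = src (σ (π.symm v)).1 := by
      intro v
      rw [hgdef]
      simp only
      rw [dif_neg v.2]
    have hedge : ∀ e, e ∈ X → ∀ v : V, tgt e = v → g v = src e := by
      intro e he v htv
      have hv : v ≠ s := by
        rintro rfl
        exact hA0 (σ.symm ⟨e, he⟩) (by rw [σ.apply_symm_apply]; exact htv)
      have h1 : π (σ.symm ⟨e, he⟩) = ⟨v, hv⟩ :=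
        Subtype.ext (by rw [← hπ, σ.apply_symm_apply]; exact htv)
      have h2 : π.symm ⟨v, hv⟩ = σ.symm ⟨e, he⟩ := by rw [← h1, π.symm_apply_apply]
      calc g v = src (σ (π.symm ⟨v, hv⟩)).1 := hg ⟨v, hv⟩
        _ = src e := by rw [h2, σ.apply_symm_apply]
    have hstep : ∀ v : {v : V // v ≠ s}, ∃ e ∈ X, src e = g v.1 ∧ tgt e = v.1 :=
      fun v => ⟨(σ (π.symm v)).1, (σ (π.symm v)).2, (hg v).symm, hπs v⟩
    have hreach_iff : ∀ v : V,
        Relation.ReflTransGen (fun a b => ∃ e ∈ X, src e = a ∧ tgt e = b) s v ↔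
          ∃ k, g^[k] v = s := by
      intro v
      constructor
      · intro h
        induction h with
        | refl => exact ⟨0, rfl⟩
        | @tail b c h1 h2 ih =>
          obtain ⟨e, he, hsrc, htgt⟩ := h2
          obtain ⟨k, hk⟩ := ih
          refine ⟨k + 1, ?_⟩
          rw [Function.iterate_succ_apply, hedge e he c htgt, hsrc, hk]
      · rintro ⟨k, hk⟩
        induction k generalizing v with
        | zero => exact hk ▸ Relation.ReflTransGen.refl
        | succ k ih =>
          rcases eq_or_ne v s with rfl | hv
          · exact Relation.ReflTransGen.refl
          · have hk' : g^[k] (g v) = s := by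
              rw [← Function.iterate_succ_apply]; exact hk
            obtain ⟨e, he, hsrc, htgt⟩ := hstep ⟨v, hv⟩
            exact (ih _ hk').tail ⟨e, he, hsrc, htgt⟩
    have hcond2 : ∀ e ∈ X, tgt e ≠ s := by
      intro e he
      have h := hA0 (σ.symm ⟨e, he⟩)
      rwa [σ.apply_symm_apply] at h
    have hcond1 : ∀ v : V, v ≠ s → ∃! e, e ∈ X ∧ tgt e = v := by
      intro v hv
      refine ⟨(σ (π.symm ⟨v, hv⟩)).1, ⟨(σ (π.symm ⟨v, hv⟩)).2, hπs ⟨v, hv⟩⟩, ?_⟩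
      rintro e ⟨he, hte⟩
      have h1 : π (σ.symm ⟨e, he⟩) = ⟨v, hv⟩ :=
        Subtype.ext (by rw [← hπ, σ.apply_symm_apply]; exact hte)
      rw [← h1, π.symm_apply_apply, σ.apply_symm_apply]
    -- determinant of N
    have hNdet : N.det = ((Equiv.Perm.sign π : ℤˣ) : ℤ) := by
      have h : N = Matrix.of fun u w => if π w = u then (1:ℤ) else 0 := by
        rw [hNdef]
        ext u w
        simp only [Matrix.of_apply, hπ w]
        simp [Subtype.ext_iff]
      rw [h, det_perm_indicator]
    -- the parent matrix
    set A : Matrix {v : V // v ≠ s} {v : V // v ≠ s} ℤ :=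
      Matrix.of fun u v => if g v.1 = u.1 then (1:ℤ) else 0 with hAdef
    have hMsub : M.submatrix id π.symm = 1 - A := by
      ext u v
      simp only [Matrix.submatrix_apply, id_eq, hMdef, hAdef, Matrix.of_apply,
        Matrix.sub_apply, Matrix.one_apply]
      rw [hπs v, ← hg v]
      congr 1
      simp [Subtype.ext_iff, eq_comm]
    have hprod : M.det * N.det = (1 - A).det := by
      have hε := Matrix.det_permute' π.symm M
      rw [hMsub, Equiv.Perm.sign_symm] at hε
      rcases Int.units_eq_one_or (Equiv.Perm.sign π) with h | h <;>
        rw [h] at hε hNdet <;> rw [hNdet, hε] <;> push_cast <;> ring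
    rw [hprod]
    by_cases hreach : ∀ v : V, ∃ k, g^[k] v = s
    · have hob : IsOutBranching src tgt X s :=
        ⟨hcond1, hcond2, fun v => (hreach_iff v).2 (hreach v)⟩
      rw [if_pos hob]
      apply det_one_sub_of_rank A (fun v => Nat.find (hreach v.1))
      intro u v huv
      have hguv : g v.1 = u.1 := by
        by_contra h
        apply huv
        rw [hAdef]
        simp [h]
      have hk := Nat.find_spec (hreach v.1)
      have hkpos : Nat.find (hreach v.1) ≠ 0 := by
        intro h0
        rw [h0] at hk
        exact v.2 hk
      obtain ⟨k', hk'⟩ : ∃ k', Nat.find (hreach v.1) = k' + 1 :=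
        ⟨Nat.find (hreach v.1) - 1, by omega⟩
      have hu' : g^[k'] u.1 = s := by
        have h3 : g^[k' + 1] v.1 = s := by rw [← hk']; exact hk
        rw [Function.iterate_succ_apply, hguv] at h3
        exact h3
      have h4 : Nat.find (hreach u.1) ≤ k' := Nat.find_le hu'
      omega
    · rw [if_neg (fun hob => hreach (fun v => (hreach_iff v).1 (hob.2.2 v)))]
      push_neg at hreach
      obtain ⟨v₀, hv₀⟩ := hreach
      obtain ⟨i, j, hij, hij2⟩ :=
        Finite.exists_ne_map_eq_of_infinite (fun k : ℕ => g^[k] v₀)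
      have key : ∃ i j, i < j ∧ g^[i] v₀ = g^[j] v₀ := by
        rcases hij.lt_or_gt with h | h
        · exact ⟨i, j, h, hij2⟩
        · exact ⟨j, i, h, hij2.symm⟩
      clear hij hij2
      obtain ⟨i, j, hlt, hijeq⟩ := key
      set w := g^[i] v₀ with hw
      set m := j - i with hm
      have hm1 : 1 ≤ m := by omega
      have hwm : g^[m] w = w := by
        rw [hw, ← Function.iterate_add_apply]
        have h2 : m + i = j := by omega
        rw [h2, ← hijeq]
      have hws : ∀ k, g^[k] w ≠ s := by
        intro k
        rw [hw, ← Function.iterate_add_apply]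
        exact hv₀ _
      have hretr : ∀ z : V, (∃ a, g^[a] w = z) → g^[m - 1] (g z) = z := by
        rintro z ⟨a, rfl⟩
        have h1 : g (g^[a] w) = g^[a + 1] w := (Function.iterate_succ_apply' g a w).symm
        rw [h1, ← Function.iterate_add_apply]
        have h2 : m - 1 + (a + 1) = a + m := by omega
        rw [h2, Function.iterate_add_apply, hwm]
      set x : {v : V // v ≠ s} → ℤ :=
        fun v => if ∃ a, g^[a] w = v.1 then 1 else 0 with hxdef
      have hx0 : x ≠ 0 := by
        intro h
        have hh := congrFun h ⟨w, hws 0⟩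
        rw [hxdef] at hh
        simp only at hh
        rw [if_pos ⟨0, rfl⟩] at hh
        exact one_ne_zero hh
      have hkey : ∀ u : {v : V // v ≠ s},
          (∑ v : {v : V // v ≠ s}, (if g v.1 = u.1 then (1:ℤ) else 0) * x v) = x u := by
        intro u
        by_cases hu : ∃ a, g^[a] w = u.1
        · obtain ⟨k, hk⟩ := hu
          set v' : {v : V // v ≠ s} := ⟨g^[k + m - 1] w, hws _⟩ with hv'
          have hgv' : g v'.1 = u.1 := by
            show g (g^[k + m - 1] w) = u.1
            have h1 : g (g^[k + m - 1] w) = g^[k + m - 1 + 1] w :=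
              (Function.iterate_succ_apply' g _ w).symm
            have h2 : k + m - 1 + 1 = k + m := by omega
            rw [h1, h2, Function.iterate_add_apply, hwm, hk]
          rw [Finset.sum_eq_single v']
          · rw [if_pos hgv', hxdef]
            simp only
            rw [if_pos ⟨k + m - 1, rfl⟩, if_pos ⟨k, hk⟩, one_mul]
          · intro v _ hv
            by_cases h1 : g v.1 = u.1
            · by_cases h2 : ∃ a, g^[a] w = v.1
              · exfalso
                apply hv
                have e1 : g^[m-1] (g v.1) = v.1 := hretr _ h2
                have e2 : g^[m-1] (g v'.1) = v'.1 := hretr _ ⟨k + m - 1, rfl⟩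
                apply Subtype.ext
                rw [← e1, ← e2, h1, hgv']
              · rw [hxdef]
                simp only
                rw [if_neg h2, mul_zero]
            · rw [if_neg h1, zero_mul]
          · intro h; exact absurd (Finset.mem_univ v') h
        · rw [Finset.sum_eq_zero, hxdef]
          · simp only
            rw [if_neg hu]
          · intro v _
            by_cases h1 : g v.1 = u.1
            · by_cases h2 : ∃ a, g^[a] w = v.1
              · exfalso
                apply hu
                obtain ⟨a, ha⟩ := h2
                exact ⟨a + 1, by rw [Function.iterate_succ_apply', ha, h1]⟩
              · rw [hxdef]
                simp only
                rw [if_neg h2, mul_zero]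
            · rw [if_neg h1, zero_mul]
      apply det_eq_zero_of_mulVec' _ x hx0
      funext u
      have hexp : ((1 - A).mulVec x) u =
          x u - ∑ v : {v : V // v ≠ s}, (if g v.1 = u.1 then (1:ℤ) else 0) * x v := by
        simp only [Matrix.mulVec, dotProduct, Matrix.sub_apply, Matrix.one_apply,
          hAdef, Matrix.of_apply, sub_mul, Finset.sum_sub_distrib, ite_mul, one_mul, zero_mul]
        rw [Finset.sum_ite_eq]
        simp
      rw [hexp, hkey, sub_self]
      rfl
end

section
/- Let G be a directed multigraph on n vertices with distinguished vertex s and Laplacian L_G = D_G - A_G (in-degree diagonal minus adjacency). Then det(L_G^{-s}), the determinant of the Laplacian with the row and column of s deleted, equals the number of out-branchings of G rooted at s. (Directed Matrix-Tree theorem, derived via the Cauchy–Binet formula and the incidence factorization L_G^{-s} = (I_G^{-s} - O_G^{-s})(I_G^{-s})ᵀ.) -/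
/-!
Transposing, row `w` of the reduced Laplacian is the sum, over the arcs `e` entering `w`, of the
reduced incidence vector `1_{tgt e} - 1_{src e}` (coordinate `s` deleted). Multilinearity of the
determinant in the rows (the Cauchy–Binet expansion of `L^{-s} = (I^{-s} - O^{-s})(I^{-s})ᵀ`)
writes `det L^{-s}` as a sum over the choices `g` of one entering arc per non-root vertex. For such
a choice the matrix is `1 - N`, where `N` is the adjacency matrix of the parent map
`v ↦ src (g v)` on the non-root vertices. If iterating the parent map leads every vertex to `s`,
then `N` is nilpotent and `det (1 - N) = 1`; otherwise the indicator of the vertices that never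
reach `s` is constant along the parent map, hence a kernel vector of `1 - N`, and the determinant
vanishes. Finally `g ↦ range g` is a bijection from the choices whose parent map leads every
vertex to `s` onto the out-branchings.
-/

open Matrix
open scoped Classical

theorem Matrix.det_one_sub_of_isNilpotent {n R : Type*} [Fintype n] [DecidableEq n] [CommRing R]
    [IsDomain R] {N : Matrix n n R} (hN : IsNilpotent N) : (1 - N).det = 1 := by
  have hchar : N.charpoly = Polynomial.X ^ Fintype.card n :=
    sub_eq_zero.mp (isNilpotent_charpoly_sub_pow_of_isNilpotent hN).eq_zero
  simpa [hchar] using (eval_charpoly N 1).symm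

section FunctionalGraph

variable {V : Type*} (R : Type*) [DecidableEq V] [CommRing R] (s : V) (p : V → V)

def parentMatrix : Matrix {v // v ≠ s} {v // v ≠ s} R :=
  of fun w u => if p w = u then 1 else 0

variable [Fintype V] {s p}

theorem parentMatrix_mulVec (x : V → R) (hx : x s = 0) :
    parentMatrix R s p *ᵥ (fun w : {v // v ≠ s} => x w) = fun w : {v // v ≠ s} => x (p w) := by
  ext w
  simp only [mulVec, dotProduct, parentMatrix, of_apply, ite_mul, one_mul, zero_mul]
  by_cases h : p w = s
  · rw [h, hx]
    exact Finset.sum_eq_zero fun u _ => if_neg fun hu => u.2 hu.symm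
  · rw [Fintype.sum_eq_single ⟨p w, h⟩ fun u hu => if_neg fun hpu => hu (Subtype.ext hpu.symm),
      if_pos rfl]

theorem parentMatrix_pow_mulVec (hp : p s = s) (x : V → R) (hx : x s = 0) (k : ℕ) :
    parentMatrix R s p ^ k *ᵥ (fun w : {v // v ≠ s} => x w) =
      fun w : {v // v ≠ s} => x (p^[k] w) := by
  induction k with
  | zero => simp
  | succ k ih =>
    rw [pow_succ', ← mulVec_mulVec, ih,
      parentMatrix_mulVec R (fun v => x (p^[k] v)) (by rw [Function.iterate_fixed hp, hx])]
    rfl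

theorem isNilpotent_parentMatrix (hp : p s = s) (hroot : ∀ v, ∃ k, p^[k] v = s) :
    IsNilpotent (parentMatrix R s p) := by
  obtain ⟨k, hk⟩ : ∃ k, ∀ v, p^[k] v = s := by
    refine (Filter.eventually_all.2 fun v => Filter.eventually_atTop.2 ?_).exists
      (f := Filter.atTop)
    obtain ⟨k, hk⟩ := hroot v
    exact ⟨k, fun m hm => by
      rw [← Nat.sub_add_cancel hm, Function.iterate_add_apply, hk, Function.iterate_fixed hp]⟩
  refine ⟨k, ext_iff_mulVec.2 fun y => ?_⟩
  let x : V → R := fun v => if h : v = s then 0 else y ⟨v, h⟩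
  have hy : y = fun w : {v // v ≠ s} => x w := by ext w; simp [x, w.2]
  rw [hy, parentMatrix_pow_mulVec R hp x (by simp [x])]
  ext w
  simp [x, hk]

theorem det_one_sub_parentMatrix_eq_zero [IsDomain R] (hroot : ¬ ∀ v, ∃ k, p^[k] v = s) :
    (1 - parentMatrix R s p).det = 0 := by
  let x : V → R := fun v => if ∃ k, p^[k] v = s then 0 else 1
  have hpx : ∀ w : {v // v ≠ s}, x (p w) = x w := fun w => by
    have : (∃ k, p^[k] (p w) = s) ↔ ∃ k, p^[k] w = s :=
      ⟨fun ⟨k, hk⟩ => ⟨k + 1, hk⟩, fun ⟨k, hk⟩ => by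
        cases k with
        | zero => exact absurd hk w.2
        | succ k => exact ⟨k, hk⟩⟩
    simp only [x, this]
  obtain ⟨v, hv⟩ := not_forall.1 hroot
  have hx : (fun w : {v // v ≠ s} => x w) ≠ 0 :=
    Function.ne_iff.2 ⟨⟨v, fun h => hv ⟨0, h⟩⟩, by simp [x, hv]⟩
  refine exists_mulVec_eq_zero_iff.1 ⟨_, hx, ?_⟩
  rw [sub_mulVec, one_mulVec, parentMatrix_mulVec R x (if_pos ⟨0, rfl⟩)]
  ext w
  simp [hpx]

theorem det_one_sub_parentMatrix [IsDomain R] (hp : p s = s) :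
    (1 - parentMatrix R s p).det = if ∀ v, ∃ k, p^[k] v = s then 1 else 0 := by
  split_ifs with hroot
  · exact det_one_sub_of_isNilpotent (isNilpotent_parentMatrix R hp hroot)
  · exact det_one_sub_parentMatrix_eq_zero R hroot

end FunctionalGraph

theorem Relation.reflTransGen_iff_exists_iterate {V : Type*} (s : V) (p : V → V) (v : V) :
    Relation.ReflTransGen (fun a b => b ≠ s ∧ p b = a) s v ↔ ∃ k, p^[k] v = s := by
  constructor
  · intro h
    induction h with
    | refl => exact ⟨0, rfl⟩
    | tail _ hbc ih =>
      obtain ⟨k, hk⟩ := ih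
      exact ⟨k + 1, by rw [Function.iterate_succ_apply, hbc.2, hk]⟩
  · rintro ⟨k, hk⟩
    induction k generalizing v with
    | zero => exact hk ▸ .refl
    | succ k ih =>
      by_cases hv : v = s
      · exact hv ▸ .refl
      · exact (ih (p v) hk).tail ⟨hv, rfl⟩

section OutBranching

variable {V E : Type} (src tgt : E → V) (s : V)

def reducedLaplacian [DecidableEq V] [Fintype E] : Matrix {v : V // v ≠ s} {v : V // v ≠ s} ℤ :=
  Matrix.of fun u w : {v : V // v ≠ s} =>
    ((if u = w then ((Finset.univ.filter fun e => tgt e = u.1).card : ℤ) else 0) -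
      ((Finset.univ.filter fun e => src e = u.1 ∧ tgt e = w.1).card : ℤ))

def reducedIncidence [DecidableEq V] (e : E) : {v : V // v ≠ s} → ℤ :=
  fun u => (if tgt e = u then 1 else 0) - (if src e = u then 1 else 0)

def inEdges [DecidableEq V] [Fintype E] (w : {v : V // v ≠ s}) : Finset E :=
  Finset.univ.filter fun e => tgt e = w

theorem reducedLaplacian_transpose [DecidableEq V] [Fintype E] :
    (reducedLaplacian src tgt s)ᵀ =
      of fun w => ∑ e ∈ inEdges tgt s w, reducedIncidence src tgt s e := by
  ext w u
  simp only [reducedLaplacian, reducedIncidence, inEdges, transpose_apply, of_apply,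
    Finset.sum_apply, Finset.sum_sub_distrib, Finset.sum_boole, Finset.filter_filter]
  congr 1
  · split_ifs with h
    · simp [h]
    · rw [eq_comm, Nat.cast_eq_zero, Finset.card_eq_zero, Finset.filter_eq_empty_iff]
      exact fun e _ he => h (Subtype.ext (he.2.symm.trans he.1))
  · simp_rw [and_comm]

theorem det_reducedLaplacian [Fintype V] [DecidableEq V] [Fintype E] :
    (reducedLaplacian src tgt s).det =
      ∑ g ∈ Fintype.piFinset (inEdges tgt s),
        (of fun w => reducedIncidence src tgt s (g w)).det := by
  rw [← det_transpose, reducedLaplacian_transpose]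
  exact (detRowAlternating (R := ℤ)).toMultilinearMap.map_sum_finset _ _

def parentMap [DecidableEq V] (g : {v : V // v ≠ s} → E) : V → V :=
  fun v => if h : v = s then s else src (g ⟨v, h⟩)

variable {src tgt s}

theorem parentMap_self [DecidableEq V] (g : {v : V // v ≠ s} → E) : parentMap src s g s = s :=
  dif_pos rfl

theorem parentMap_of_ne [DecidableEq V] (g : {v : V // v ≠ s} → E) {v : V} (hv : v ≠ s) :
    parentMap src s g v = src (g ⟨v, hv⟩) :=
  dif_neg hv

theorem reducedIncidence_eq_one_sub_parentMatrix [DecidableEq V]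
    {g : {v : V // v ≠ s} → E} (hg : ∀ w, tgt (g w) = w) :
    (of fun w => reducedIncidence src tgt s (g w)) = 1 - parentMatrix ℤ s (parentMap src s g) := by
  ext w u
  simp [reducedIncidence, parentMatrix, parentMap, hg, one_apply, w.2, Subtype.ext_iff]

theorem isOutBranching_image_iff [Fintype V] [DecidableEq V] [DecidableEq E]
    {g : {v : V // v ≠ s} → E} (hg : ∀ w, tgt (g w) = w) :
    IsOutBranching src tgt (Finset.univ.image g) s ↔ ∀ v, ∃ k, (parentMap src s g)^[k] v = s := by
  have hedge : (fun a b => ∃ e ∈ Finset.univ.image g, src e = a ∧ tgt e = b) =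
      fun a b => b ≠ s ∧ parentMap src s g b = a := by
    ext a b
    constructor
    · rintro ⟨e, he, rfl, rfl⟩
      obtain ⟨w, -, rfl⟩ := Finset.mem_image.1 he
      rw [hg]
      exact ⟨w.2, parentMap_of_ne g w.2⟩
    · rintro ⟨hb, rfl⟩
      exact ⟨g ⟨b, hb⟩, Finset.mem_image_of_mem _ (Finset.mem_univ _),
        (parentMap_of_ne g hb).symm, hg _⟩
  have hunique : ∀ v, v ≠ s → ∃! e, e ∈ Finset.univ.image g ∧ tgt e = v := by
    refine fun v hv => ⟨g ⟨v, hv⟩, ⟨Finset.mem_image_of_mem _ (Finset.mem_univ _), hg _⟩, ?_⟩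
    rintro e ⟨he, rfl⟩
    obtain ⟨w, -, rfl⟩ := Finset.mem_image.1 he
    simp only [hg]
  have htgt : ∀ e ∈ Finset.univ.image g, tgt e ≠ s := by
    intro e he
    obtain ⟨w, -, rfl⟩ := Finset.mem_image.1 he
    exact hg w ▸ w.2
  rw [IsOutBranching, hedge, and_iff_right hunique, and_iff_right htgt]
  exact forall_congr' fun v => Relation.reflTransGen_iff_exists_iterate s _ v

theorem injOn_image_of_forall_tgt_eq [Fintype V] [DecidableEq V] [DecidableEq E] :
    Set.InjOn (fun g : {v : V // v ≠ s} → E => Finset.univ.image g) {g | ∀ w, tgt (g w) = w} := by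
  intro g₁ hg₁ g₂ hg₂ (h : Finset.univ.image g₁ = Finset.univ.image g₂)
  funext w
  obtain ⟨w', -, hw'⟩ := Finset.mem_image.1 (h ▸ Finset.mem_image_of_mem g₁ (Finset.mem_univ w))
  obtain rfl : w' = w := Subtype.ext (by rw [← hg₁ w, ← hw', hg₂ w'])
  exact hw'.symm

theorem exists_image_eq_of_isOutBranching [Fintype V] [DecidableEq V] [DecidableEq E]
    {X : Finset E} (hX : IsOutBranching src tgt X s) :
    ∃ g : {v : V // v ≠ s} → E, (∀ w, tgt (g w) = w) ∧ Finset.univ.image g = X := by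
  choose g hgX hg using fun w : {v : V // v ≠ s} => (hX.1 w w.2).exists
  refine ⟨g, hg, Finset.ext fun e => ⟨?_, fun he => ?_⟩⟩
  · intro he
    obtain ⟨w, -, rfl⟩ := Finset.mem_image.1 he
    exact hgX w
  · have hs : tgt e ≠ s := hX.2.1 e he
    exact Finset.mem_image.2 ⟨⟨tgt e, hs⟩, Finset.mem_univ _,
      (hX.1 _ hs).unique ⟨hgX _, hg _⟩ ⟨he, rfl⟩⟩

theorem mem_piFinset_inEdges [Fintype V] [DecidableEq V] [Fintype E] {g : {v : V // v ≠ s} → E} :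
    g ∈ Fintype.piFinset (inEdges tgt s) ↔ ∀ w, tgt (g w) = w := by
  simp [inEdges]

theorem card_piFinset_filter_eq_card_isOutBranching [Fintype V] [DecidableEq V] [Fintype E]
    [DecidableEq E] :
    ((Fintype.piFinset (inEdges tgt s)).filter
        fun g => ∀ v, ∃ k, (parentMap src s g)^[k] v = s).card =
      (Finset.univ.filter fun X => IsOutBranching src tgt X s).card := by
  rw [← Finset.card_image_of_injOn (injOn_image_of_forall_tgt_eq.mono fun g hg =>
    mem_piFinset_inEdges.1 (Finset.mem_filter.1 hg).1)]
  congr 1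
  ext X
  simp only [Finset.mem_image, Finset.mem_filter, Finset.mem_univ, true_and, mem_piFinset_inEdges]
  constructor
  · rintro ⟨g, ⟨hg, hroot⟩, rfl⟩
    exact (isOutBranching_image_iff hg).2 hroot
  · intro hX
    obtain ⟨g, hg, rfl⟩ := exists_image_eq_of_isOutBranching hX
    exact ⟨g, ⟨hg, (isOutBranching_image_iff hg).1 hX⟩, rfl⟩

end OutBranching

theorem directed_matrix_tree_general
    {V E : Type} [Fintype V] [Fintype E] [DecidableEq V]
    (src tgt : E → V) (s : V) :
    (Matrix.of fun u w : {v : V // v ≠ s} =>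
        ((if u = w then ((Finset.univ.filter fun e => tgt e = u.1).card : ℤ) else 0) -
          ((Finset.univ.filter fun e => src e = u.1 ∧ tgt e = w.1).card : ℤ))).det
    = (((Finset.univ : Finset (Finset E)).filter fun X =>
          IsOutBranching src tgt X s).card : ℤ) := by
  calc (reducedLaplacian src tgt s).det
      = ∑ g ∈ Fintype.piFinset (inEdges tgt s),
          (of fun w => reducedIncidence src tgt s (g w)).det := det_reducedLaplacian src tgt s
    _ = ∑ g ∈ Fintype.piFinset (inEdges tgt s),
          if ∀ v, ∃ k, (parentMap src s g)^[k] v = s then 1 else 0 := by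
        refine Finset.sum_congr rfl fun g hg => ?_
        rw [reducedIncidence_eq_one_sub_parentMatrix (mem_piFinset_inEdges.1 hg),
          det_one_sub_parentMatrix ℤ (parentMap_self g)]
    _ = _ := by
        rw [Finset.sum_boole, card_piFinset_filter_eq_card_isOutBranching]

/-- Directed Matrix-Tree theorem: for a loopless directed multigraph, the
    determinant of the (in-degree) Laplacian with the row and column of s
    deleted equals the number of out-branchings rooted at s. -/
theorem directed_matrix_tree
    {V E : Type} [Fintype V] [Fintype E] [DecidableEq V] [DecidableEq E]
    (src tgt : E → V) (hloop : ∀ e, src e ≠ tgt e) (s : V) :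
    (Matrix.of fun u w : {v : V // v ≠ s} =>
        ((if u = w then ((Finset.univ.filter fun e => tgt e = u.1).card : ℤ) else 0) -
          ((Finset.univ.filter fun e => src e = u.1 ∧ tgt e = w.1).card : ℤ))).det
    = (((Finset.univ : Finset (Finset E)).filter fun X =>
          IsOutBranching src tgt X s).card : ℤ) :=
  directed_matrix_tree_general src tgt s
end
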